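/- Let (Y, D) be a 1-cell with Y ≠ ∅, and let {a, b} ⊆ D be the unique pair of distinct colors with min_a Y = min_b Y. Then for i ∈ D, the set Y is dominant with respect to D \ {i} if and only if i ∈ {a, b} and the set M_i = { y ∈ T : min_k Y <_k y for all k ∈ D \ {i} } is empty. -/

import Mathlib

/-!
Write `g k = min_k Y`. Dominance of `Y` with respect to `D` forces every `x ∈ Y` to be some
`g k` with `k ∈ D` (otherwise `x` itself lies strictly above all these minima), so `g` maps `D`
onto `Y`. As `|D| = |Y| + 1` and `g a = g b`, the pair `{a, b}` is the only collision of `g`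
on `D`. Hence for `i ∉ {a, b}` the element `g i` lies strictly above `g k` in `<_k` for every
`k ∈ D \ {i}`, so `Y` is not dominant with respect to `D \ {i}`; and for any `i`, dominance
with respect to `D \ {i}` is literally the emptiness of `M_i`.
-/

/-- `X ⊆ T` is dominant with respect to `C ⊆ I` (for the family of linear orders `o`)
if either `X = ∅`, or `X ≠ ∅` and there is no `y : T` with `min_i X <_i y` for all `i ∈ C`. -/
def Dominant {T I : Type*} (o : I → LinearOrder T) (X : Finset T) (C : Finset I) : Prop :=
  ∀ hX : X.Nonempty, ¬ ∃ y : T, ∀ i ∈ C, (o i).lt (@Finset.min' T (o i) X hX) y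

/-- A pair `(X, C)` is a cell if `C ≠ ∅`, `X` is dominant with respect to `C`,
and `|C \ c(X)| ≤ 1`. -/
def IsCell {T I : Type*} [DecidableEq T] [DecidableEq I]
    (o : I → LinearOrder T) (c : T → I) (X : Finset T) (C : Finset I) : Prop :=
  C.Nonempty ∧ Dominant o X C ∧ (C \ X.image c).card ≤ 1

/-- A 0-cell is a cell `(X, C)` with `|C| = |X|`. -/
def IsZeroCell {T I : Type*} [DecidableEq T] [DecidableEq I]
    (o : I → LinearOrder T) (c : T → I) (X : Finset T) (C : Finset I) : Prop :=
  IsCell o c X C ∧ C.card = X.card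

/-- A 1-cell is a cell `(X, C)` with `|C| = |X| + 1`. -/
def IsOneCell {T I : Type*} [DecidableEq T] [DecidableEq I]
    (o : I → LinearOrder T) (c : T → I) (X : Finset T) (C : Finset I) : Prop :=
  IsCell o c X C ∧ C.card = X.card + 1

/-- A 1-cell `(Y, D)` is a face of a 0-cell `(X, C)` if either `D = C` and
`Y = X \ {x}` for some `x ∈ X`, or `Y = X` and `D = C ∪ {i}` for some `i ∉ C`. -/
def IsFace {T I : Type*} [DecidableEq T] [DecidableEq I]
    (o : I → LinearOrder T) (c : T → I)
    (Y : Finset T) (D : Finset I) (X : Finset T) (C : Finset I) : Prop :=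
  IsOneCell o c Y D ∧ IsZeroCell o c X C ∧
    ((D = C ∧ ∃ x ∈ X, Y = X.erase x) ∨ (Y = X ∧ ∃ i, i ∉ C ∧ D = insert i C))

open Finset

namespace Finset

variable {α β : Type*} [DecidableEq α] [DecidableEq β]

theorem injOn_erase_of_card_le_card_image_add_one {f : α → β} {s : Finset α}
    (hcard : #s ≤ #(s.image f) + 1) {a b : α} (ha : a ∈ s) (hb : b ∈ s) (hab : a ≠ b)
    (hfab : f a = f b) : Set.InjOn f (s.erase a) := by
  have himage : (s.erase a).image f = s.image f := by
    refine Subset.antisymm (image_subset_image (erase_subset a s)) fun y hy => ?_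
    obtain ⟨k, hk, rfl⟩ := mem_image.mp hy
    rcases eq_or_ne k a with rfl | hka
    · exact hfab ▸ mem_image_of_mem f (mem_erase.mpr ⟨hab.symm, hb⟩)
    · exact mem_image_of_mem f (mem_erase.mpr ⟨hka, hk⟩)
  refine injOn_of_card_image_eq (le_antisymm card_image_le ?_)
  rw [himage, card_erase_of_mem ha]
  omega

theorem eq_or_eq_of_card_le_card_image_add_one {f : α → β} {s : Finset α}
    (hcard : #s ≤ #(s.image f) + 1) {a b : α} (ha : a ∈ s) (hb : b ∈ s) (hab : a ≠ b)
    (hfab : f a = f b) {i j : α} (hi : i ∈ s) (hj : j ∈ s) (hij : i ≠ j) (hf : f i = f j) :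
    i = a ∨ i = b := by
  have hinj := injOn_erase_of_card_le_card_image_add_one hcard ha hb hab hfab
  rcases eq_or_ne i a with hia | hia
  · exact Or.inl hia
  have hi' : i ∈ s.erase a := mem_erase.mpr ⟨hia, hi⟩
  rcases eq_or_ne j a with rfl | hja
  · exact Or.inr (hinj hi' (mem_erase.mpr ⟨hab.symm, hb⟩) (hf.trans hfab))
  · exact absurd (hinj hi' (mem_erase.mpr ⟨hja, hj⟩) hf) hij

end Finset

section Cells

variable {T I : Type*} {o : I → LinearOrder T}

theorem dominant_iff_eq_empty {X : Finset T} {C : Finset I} (hX : X.Nonempty) :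
    Dominant o X C ↔
      {y : T | ∀ k ∈ C, (o k).lt (@Finset.min' T (o k) X hX) y} = ∅ :=
  ⟨fun h => Set.eq_empty_iff_forall_notMem.mpr fun y hy => h hX ⟨y, hy⟩,
    fun h _ ⟨y, hy⟩ => Set.eq_empty_iff_forall_notMem.mp h y hy⟩

theorem lt_min'_of_ne {X : Finset T} (hX : X.Nonempty) (k : I) {x : T} (hx : x ∈ X)
    (hne : @Finset.min' T (o k) X hX ≠ x) : (o k).lt (@Finset.min' T (o k) X hX) x :=
  letI := o k
  lt_of_le_of_ne (min'_le X x hx) hne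

theorem Dominant.subset_image_min' [DecidableEq T] {X : Finset T} {C : Finset I}
    (h : Dominant o X C) (hX : X.Nonempty) :
    X ⊆ C.image fun k => @Finset.min' T (o k) X hX := by
  intro x hx
  by_contra hx'
  simp only [mem_image, not_exists, not_and] at hx'
  exact h hX ⟨x, fun k hk => lt_min'_of_ne hX k hx (hx' k hk)⟩

theorem Dominant.image_min'_eq [DecidableEq T] {X : Finset T} {C : Finset I}
    (h : Dominant o X C) (hX : X.Nonempty) :
    (C.image fun k => @Finset.min' T (o k) X hX) = X :=
  Subset.antisymm (image_subset_iff.mpr fun k _ => @min'_mem T (o k) X hX)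
    (h.subset_image_min' hX)

end Cells

theorem stmt11_general {T I : Type*}
    [DecidableEq T] [DecidableEq I] (o : I → LinearOrder T) (c : T → I)
    (Y : Finset T) (D : Finset I) (h1 : IsOneCell o c Y D) (hY : Y.Nonempty)
    (a b : I) (ha : a ∈ D) (hb : b ∈ D) (hab : a ≠ b)
    (hmin : @Finset.min' T (o a) Y hY = @Finset.min' T (o b) Y hY) :
    ∀ i ∈ D, (Dominant o Y (D.erase i) ↔
      ((i = a ∨ i = b) ∧
        {y : T | ∀ k ∈ D.erase i, (o k).lt (@Finset.min' T (o k) Y hY) y} = ∅)) := by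
  obtain ⟨⟨-, hdom, -⟩, hcard⟩ := h1
  set g : I → T := fun k => @Finset.min' T (o k) Y hY
  have hcard' : #D ≤ #(D.image g) + 1 := by rw [hdom.image_min'_eq hY, hcard]
  intro i hi
  rw [dominant_iff_eq_empty hY]
  refine ⟨fun hM => ⟨?_, hM⟩, And.right⟩
  by_contra hiab
  refine Set.eq_empty_iff_forall_notMem.mp hM (g i) fun k hk => ?_
  obtain ⟨hki, hk⟩ := mem_erase.mp hk
  refine lt_min'_of_ne hY k (@min'_mem T (o i) Y hY) fun hgk => hiab ?_
  exact eq_or_eq_of_card_le_card_image_add_one hcard' ha hb hab hmin hi hk (Ne.symm hki) hgk.symm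

/-- Let `(Y, D)` be a 1-cell with `Y ≠ ∅`, and let `a ≠ b` in `D` be the unique pair
with `min_a Y = min_b Y`. Then for `i ∈ D`, the set `Y` is dominant with respect to
`D \ {i}` if and only if `i ∈ {a, b}` and
`M_i = { y ∈ T : min_k Y <_k y for all k ∈ D \ {i} }` is empty. -/
theorem stmt11 {T I : Type*} [Fintype T] [Fintype I] [Nonempty T] [Nonempty I]
    [DecidableEq T] [DecidableEq I] (o : I → LinearOrder T) (c : T → I)
    (Y : Finset T) (D : Finset I) (h1 : IsOneCell o c Y D) (hY : Y.Nonempty)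
    (a b : I) (ha : a ∈ D) (hb : b ∈ D) (hab : a ≠ b)
    (hmin : @Finset.min' T (o a) Y hY = @Finset.min' T (o b) Y hY) :
    ∀ i ∈ D, (Dominant o Y (D.erase i) ↔
      ((i = a ∨ i = b) ∧
        {y : T | ∀ k ∈ D.erase i, (o k).lt (@Finset.min' T (o k) Y hY) y} = ∅)) :=
  stmt11_general o c Y D h1 hY a b ha hb hab hmin
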